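/- Let ε > 0 and let β be a sub-Gaussian probability measure on ℝ^d. Then the map α ↦ OT_ε(α, β) is convex on the set of sub-Gaussian probability measures on ℝ^d: for all sub-Gaussian probability measures α₀, α₁ and all λ ∈ [0,1], OT_ε(λα₀ + (1−λ)α₁, β) ≤ λ OT_ε(α₀, β) + (1−λ) OT_ε(α₁, β). -/

import Mathlib

/-!
The entropic objective `π ↦ ∫ c dπ + ε KL(π ‖ α ⊗ β)` is convex under mixing of couplings: the
transport term is linear in `π`, `α ⊗ β` is linear in `α`, and the Kullback–Leibler divergence is
jointly convex, being the integral of the perspective of the convex function `x ↦ x log x + 1 - x`.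
A mixture of couplings of `(α₀, β)` and `(α₁, β)` with weights `(λ, 1 - λ)` is a coupling of
`(λα₀ + (1 - λ)α₁, β)`, so taking infima over the two couplings gives convexity of `OT_ε(·, β)`.

By Gibbs' inequality the `EReal`-valued objective is the coercion of an `ℝ≥0∞`-valued one, and
in `ℝ≥0∞` infima commute with finite positive scalings and with sums.
-/

open MeasureTheory ProbabilityTheory
open scoped ENNReal Classical

/-- Kullback–Leibler divergence `KL(π ‖ ρ)`, valued in `EReal`:
`∫ log (dπ/dρ) dπ` when `π ≪ ρ` and the log-likelihood ratio is `π`-integrable,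
and `⊤` otherwise. -/
noncomputable def KLdiv {X : Type*} [MeasurableSpace X] (π ρ : Measure X) : EReal :=
  if π ≪ ρ ∧ Integrable (fun x => Real.log (π.rnDeriv ρ x).toReal) π
  then ((∫ x, Real.log (π.rnDeriv ρ x).toReal ∂π : ℝ) : EReal)
  else ⊤

/-- Entropic optimal transport cost on `ℝ^d` with quadratic cost and product reference
measure: `OT_ε(α, β) = inf { ∫ ‖x-y‖² dπ + ε KL(π ‖ α ⊗ β) }` over couplings `π`
of `α` and `β`. -/
noncomputable def OTe (d : ℕ) (ε : ℝ)
    (α β : Measure (EuclideanSpace ℝ (Fin d))) : EReal :=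
  ⨅ (π : Measure (EuclideanSpace ℝ (Fin d) × EuclideanSpace ℝ (Fin d)))
    (_ : IsProbabilityMeasure π) (_ : π.fst = α) (_ : π.snd = β),
    (((∫⁻ p, ENNReal.ofReal (‖p.1 - p.2‖ ^ 2) ∂π : ℝ≥0∞) : EReal)
      + (ε : EReal) * KLdiv π (α.prod β))

/-- A probability measure on `ℝ^d` is sub-Gaussian if `∫ exp (‖x‖²/q) dα < ∞`
for some `q > 0`. -/
def SubGaussian (d : ℕ) (α : Measure (EuclideanSpace ℝ (Fin d))) : Prop :=
  ∃ q : ℝ, 0 < q ∧ ∫⁻ x, ENNReal.ofReal (Real.exp (‖x‖ ^ 2 / q)) ∂α < ⊤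

open InformationTheory

-- The pointwise form of joint convexity: with `gᵢ = ∂ρᵢ/∂(ρ₀ + ρ₁)` and `fᵢ = ∂πᵢ/∂ρᵢ`, the
-- density of `π₀ + π₁` with respect to `ρ₀ + ρ₁` is `f₀ g₀ + f₁ g₁`.
lemma ofReal_klFun_toReal_mix_le {f₀ f₁ g₀ g₁ : ℝ≥0∞} (hg : g₀ + g₁ = 1)
    (hf : f₀ * g₀ + f₁ * g₁ ≠ ∞) :
    ENNReal.ofReal (klFun (f₀ * g₀ + f₁ * g₁).toReal)
      ≤ g₀ * ENNReal.ofReal (klFun f₀.toReal) + g₁ * ENNReal.ofReal (klFun f₁.toReal) := by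
  obtain ⟨hg₀, hg₁⟩ := ENNReal.add_ne_top.mp (hg ▸ ENNReal.one_ne_top)
  obtain ⟨hf₀, hf₁⟩ := ENNReal.add_ne_top.mp hf
  have hw : g₀.toReal + g₁.toReal = 1 := by
    rw [← ENNReal.toReal_add hg₀ hg₁, hg, ENNReal.toReal_one]
  have hconv := convexOn_klFun.2 (Set.mem_Ici.mpr (ENNReal.toReal_nonneg (a := f₀)))
    (Set.mem_Ici.mpr (ENNReal.toReal_nonneg (a := f₁))) ENNReal.toReal_nonneg
    ENNReal.toReal_nonneg hw
  rw [ENNReal.toReal_add hf₀ hf₁, ENNReal.toReal_mul, ENNReal.toReal_mul,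
    ← ENNReal.ofReal_toReal hg₀, ← ENNReal.ofReal_toReal hg₁,
    ← ENNReal.ofReal_mul ENNReal.toReal_nonneg, ← ENNReal.ofReal_mul ENNReal.toReal_nonneg,
    ← ENNReal.ofReal_add (mul_nonneg ENNReal.toReal_nonneg (klFun_nonneg ENNReal.toReal_nonneg))
      (mul_nonneg ENNReal.toReal_nonneg (klFun_nonneg ENNReal.toReal_nonneg))]
  refine ENNReal.ofReal_le_ofReal ?_
  simpa only [smul_eq_mul, mul_comm, ENNReal.toReal_ofReal ENNReal.toReal_nonneg] using hconv

lemma EReal.coe_ennreal_iInf {ι : Sort*} (f : ι → ℝ≥0∞) :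
    ((⨅ i, f i : ℝ≥0∞) : EReal) = ⨅ i, (f i : EReal) :=
  Monotone.map_iInf_of_continuousAt continuous_coe_ennreal_ereal.continuousAt
    EReal.coe_ennreal_strictMono.monotone EReal.coe_ennreal_top

section KullbackLeibler

variable {X : Type*} [MeasurableSpace X]

lemma KLdiv_eq_klDiv (π ρ : Measure X) [IsProbabilityMeasure π] [IsProbabilityMeasure ρ] :
    KLdiv π ρ = klDiv π ρ := by
  unfold KLdiv
  split_ifs with h
  · have hnonneg := integral_llr_add_sub_measure_univ_nonneg h.1 h.2
    simp only [probReal_univ, add_sub_cancel_right] at hnonneg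
    rw [klDiv_of_ac_of_integrable h.1 h.2, EReal.coe_ennreal_ofReal, probReal_univ, probReal_univ,
      add_sub_cancel_right, max_eq_left hnonneg, llr_def]
  · rw [klDiv_eq_top_iff.mpr fun hac hint => h ⟨hac, hint⟩, EReal.coe_ennreal_top]

lemma klDiv_add_le (π₀ π₁ ρ₀ ρ₁ : Measure X) [IsFiniteMeasure π₀] [IsFiniteMeasure π₁]
    [IsFiniteMeasure ρ₀] [IsFiniteMeasure ρ₁] :
    klDiv (π₀ + π₁) (ρ₀ + ρ₁) ≤ klDiv π₀ ρ₀ + klDiv π₁ ρ₁ := by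
  by_cases h₀ : π₀ ≪ ρ₀
  swap; · simp [klDiv_of_not_ac h₀]
  by_cases h₁ : π₁ ≪ ρ₁
  swap; · simp [klDiv_of_not_ac h₁]
  set ρ := ρ₀ + ρ₁
  have hρ₀ : ρ₀ ≪ ρ := Measure.AbsolutelyContinuous.rfl.add_right ρ₁
  have hρ₁ : ρ₁ ≪ ρ := by
    rw [show ρ = ρ₁ + ρ₀ from add_comm _ _]; exact Measure.AbsolutelyContinuous.rfl.add_right ρ₀
  have hweights : ∀ᵐ x ∂ρ, ρ₀.rnDeriv ρ x + ρ₁.rnDeriv ρ x = 1 := by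
    filter_upwards [Measure.rnDeriv_add' ρ₀ ρ₁ ρ, Measure.rnDeriv_self ρ] with x hx hx'
    rw [← Pi.add_apply, ← hx, hx']
  have hdensity : ∀ᵐ x ∂ρ, (π₀ + π₁).rnDeriv ρ x
      = π₀.rnDeriv ρ₀ x * ρ₀.rnDeriv ρ x + π₁.rnDeriv ρ₁ x * ρ₁.rnDeriv ρ x := by
    filter_upwards [Measure.rnDeriv_add' π₀ π₁ ρ, Measure.rnDeriv_mul_rnDeriv (κ := ρ) h₀,
      Measure.rnDeriv_mul_rnDeriv (κ := ρ) h₁] with x hx hx₀ hx₁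
    rw [hx, Pi.add_apply, ← hx₀, ← hx₁, Pi.mul_apply, Pi.mul_apply]
  rw [klDiv_eq_lintegral_klFun_of_ac (h₀.add h₁), klDiv_eq_lintegral_klFun_of_ac h₀,
    klDiv_eq_lintegral_klFun_of_ac h₁, ← lintegral_rnDeriv_mul hρ₀ (by fun_prop),
    ← lintegral_rnDeriv_mul hρ₁ (by fun_prop), ← lintegral_add_left (by fun_prop)]
  refine lintegral_mono_ae ?_
  filter_upwards [hweights, hdensity, Measure.rnDeriv_lt_top (π₀ + π₁) ρ] with x hw hd hfin
  rw [hd] at hfin ⊢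
  exact ofReal_klFun_toReal_mix_le hw hfin.ne

lemma klDiv_mix_le (π₀ π₁ ρ₀ ρ₁ : Measure X) [IsFiniteMeasure π₀] [IsFiniteMeasure π₁]
    [IsFiniteMeasure ρ₀] [IsFiniteMeasure ρ₁] {a b : ℝ≥0∞} (ha : a ≠ ∞) (hb : b ≠ ∞) :
    klDiv (a • π₀ + b • π₁) (a • ρ₀ + b • ρ₁) ≤ a * klDiv π₀ ρ₀ + b * klDiv π₁ ρ₁ := by
  lift a to NNReal using ha
  lift b to NNReal using hb
  simp only [← ENNReal.smul_def]
  calc klDiv (a • π₀ + b • π₁) (a • ρ₀ + b • ρ₁)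
      ≤ klDiv (a • π₀) (a • ρ₀) + klDiv (b • π₁) (b • ρ₁) := klDiv_add_le _ _ _ _
    _ = a * klDiv π₀ ρ₀ + b * klDiv π₁ ρ₁ := by rw [klDiv_smul_same, klDiv_smul_same]

end KullbackLeibler

section EntropicTransport

variable {X Y : Type*} [MeasurableSpace X] [MeasurableSpace Y]

noncomputable def entropicCost (c : X × Y → ℝ≥0∞) (ε : ℝ) (α : Measure X) (β : Measure Y)
    (π : Measure (X × Y)) : ℝ≥0∞ :=
  ∫⁻ p, c p ∂π + ENNReal.ofReal ε * klDiv π (α.prod β)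

noncomputable def entropicOT (c : X × Y → ℝ≥0∞) (ε : ℝ) (α : Measure X) (β : Measure Y) :
    ℝ≥0∞ :=
  ⨅ (π : Measure (X × Y)) (_ : IsProbabilityMeasure π) (_ : π.fst = α) (_ : π.snd = β),
    entropicCost c ε α β π

lemma entropicOT_le_entropicCost (c : X × Y → ℝ≥0∞) (ε : ℝ) {α : Measure X} {β : Measure Y}
    (π : Measure (X × Y)) [IsProbabilityMeasure π] (hα : π.fst = α) (hβ : π.snd = β) :
    entropicOT c ε α β ≤ entropicCost c ε α β π :=
  iInf_le_of_le π <| iInf_le_of_le ‹_› <| iInf_le_of_le hα <| iInf_le_of_le hβ le_rfl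

lemma entropicCost_mix_le (c : X × Y → ℝ≥0∞) (ε : ℝ) (α₀ α₁ : Measure X) (β : Measure Y)
    (π₀ π₁ : Measure (X × Y)) [IsFiniteMeasure α₀] [IsFiniteMeasure α₁] [IsFiniteMeasure β]
    [IsFiniteMeasure π₀] [IsFiniteMeasure π₁] {a b : ℝ≥0∞} (ha : a ≠ ∞) (hb : b ≠ ∞) :
    entropicCost c ε (a • α₀ + b • α₁) β (a • π₀ + b • π₁)
      ≤ a * entropicCost c ε α₀ β π₀ + b * entropicCost c ε α₁ β π₁ := by
  have hKL := klDiv_mix_le π₀ π₁ (α₀.prod β) (α₁.prod β) ha hb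
  rw [entropicCost, Measure.add_prod, Measure.prod_smul_left, Measure.prod_smul_left,
    lintegral_add_measure, lintegral_smul_measure, lintegral_smul_measure, smul_eq_mul,
    smul_eq_mul]
  calc a * ∫⁻ p, c p ∂π₀ + b * ∫⁻ p, c p ∂π₁
        + ENNReal.ofReal ε * klDiv (a • π₀ + b • π₁) (a • α₀.prod β + b • α₁.prod β)
      ≤ a * ∫⁻ p, c p ∂π₀ + b * ∫⁻ p, c p ∂π₁
        + ENNReal.ofReal ε * (a * klDiv π₀ (α₀.prod β) + b * klDiv π₁ (α₁.prod β)) := by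
        gcongr
    _ = a * entropicCost c ε α₀ β π₀ + b * entropicCost c ε α₁ β π₁ := by
        simp only [entropicCost]; ring

lemma MeasureTheory.Measure.fst_smul (c : ℝ≥0∞) (μ : Measure (X × Y)) : (c • μ).fst = c • μ.fst :=
  Measure.map_smul c μ Prod.fst

lemma MeasureTheory.Measure.snd_smul (c : ℝ≥0∞) (μ : Measure (X × Y)) : (c • μ).snd = c • μ.snd :=
  Measure.map_smul c μ Prod.snd

lemma isProbabilityMeasure_mix (μ₀ μ₁ : Measure X) [IsProbabilityMeasure μ₀]
    [IsProbabilityMeasure μ₁] {a b : ℝ≥0∞} (hab : a + b = 1) :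
    IsProbabilityMeasure (a • μ₀ + b • μ₁) :=
  ⟨by simp [hab]⟩

lemma entropicOT_mix_le (c : X × Y → ℝ≥0∞) (ε : ℝ) (α₀ α₁ : Measure X) (β : Measure Y)
    {a b : ℝ≥0∞} (hab : a + b = 1) :
    entropicOT c ε (a • α₀ + b • α₁) β
      ≤ a * entropicOT c ε α₀ β + b * entropicOT c ε α₁ β := by
  obtain ⟨ha, hb⟩ := ENNReal.add_ne_top.mp (hab ▸ ENNReal.one_ne_top)
  rcases eq_or_ne a 0 with rfl | ha₀
  · rw [zero_add] at hab; simp [hab]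
  rcases eq_or_ne b 0 with rfl | hb₀
  · rw [add_zero] at hab; simp [hab]
  simp only [entropicOT, ENNReal.mul_iInf_of_ne ha₀ ha, ENNReal.mul_iInf_of_ne hb₀ hb,
    ENNReal.iInf_add, ENNReal.add_iInf, le_iInf_iff]
  intro π₁ hπ₁ hα₁ hβ₁ π₀ hπ₀ hα₀ hβ₀
  subst hα₀ hα₁ hβ₀
  have hπ := isProbabilityMeasure_mix π₀ π₁ hab
  have hfst : (a • π₀ + b • π₁).fst = a • π₀.fst + b • π₁.fst := by
    rw [Measure.fst_add, Measure.fst_smul, Measure.fst_smul]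
  have hsnd : (a • π₀ + b • π₁).snd = π₀.snd := by
    rw [Measure.snd_add, Measure.snd_smul, Measure.snd_smul, hβ₁, ← add_smul, hab, one_smul]
  exact (entropicOT_le_entropicCost c ε _ hfst hsnd).trans
    (entropicCost_mix_le c ε _ _ _ π₀ π₁ ha hb)

end EntropicTransport

lemma OTe_eq_coe_entropicOT (d : ℕ) {ε : ℝ} (hε : 0 ≤ ε)
    (α β : Measure (EuclideanSpace ℝ (Fin d))) :
    OTe d ε α β = entropicOT (fun p => ENNReal.ofReal (‖p.1 - p.2‖ ^ 2)) ε α β := by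
  simp only [OTe, entropicOT, EReal.coe_ennreal_iInf]
  refine iInf_congr fun π => iInf_congr fun hπ => iInf_congr fun hα => iInf_congr fun hβ => ?_
  subst hα hβ
  rw [KLdiv_eq_klDiv, entropicCost, EReal.coe_ennreal_add, EReal.coe_ennreal_mul,
    EReal.coe_ennreal_ofReal, max_eq_left hε]

theorem ot_product_convex_first_argument_general (d : ℕ) (ε : ℝ) (hε : 0 < ε)
    (β : Measure (EuclideanSpace ℝ (Fin d))) :
    ∀ α₀ α₁ : Measure (EuclideanSpace ℝ (Fin d)),
      IsProbabilityMeasure α₀ → SubGaussian d α₀ →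
      IsProbabilityMeasure α₁ → SubGaussian d α₁ →
      ∀ l : ℝ, l ∈ Set.Icc (0 : ℝ) 1 →
        OTe d ε (ENNReal.ofReal l • α₀ + ENNReal.ofReal (1 - l) • α₁) β
          ≤ ((l : ℝ) : EReal) * OTe d ε α₀ β
            + ((1 - l : ℝ) : EReal) * OTe d ε α₁ β := by
  intro α₀ α₁ _ _ _ _ l ⟨hl₀, hl₁⟩
  have hweights : ENNReal.ofReal l + ENNReal.ofReal (1 - l) = 1 := by
    rw [← ENNReal.ofReal_add hl₀ (sub_nonneg.mpr hl₁), add_sub_cancel, ENNReal.ofReal_one]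
  simp only [OTe_eq_coe_entropicOT d hε.le]
  calc _ ≤ ((ENNReal.ofReal l * entropicOT _ ε α₀ β
          + ENNReal.ofReal (1 - l) * entropicOT _ ε α₁ β : ℝ≥0∞) : EReal) :=
        EReal.coe_ennreal_le_coe_ennreal_iff.mpr (entropicOT_mix_le _ ε α₀ α₁ β hweights)
    _ = _ := by
        rw [EReal.coe_ennreal_add, EReal.coe_ennreal_mul, EReal.coe_ennreal_mul,
          EReal.coe_ennreal_ofReal, EReal.coe_ennreal_ofReal, max_eq_left hl₀,
          max_eq_left (sub_nonneg.mpr hl₁)]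

/-- for `ε > 0` and a sub-Gaussian probability measure `β` on `ℝ^d`,
the map `α ↦ OT_ε(α, β)` is convex on sub-Gaussian probability measures. -/
theorem ot_product_convex_first_argument (d : ℕ) (ε : ℝ) (hε : 0 < ε)
    (β : Measure (EuclideanSpace ℝ (Fin d)))
    (hβ : IsProbabilityMeasure β) (hβG : SubGaussian d β) :
    ∀ α₀ α₁ : Measure (EuclideanSpace ℝ (Fin d)),
      IsProbabilityMeasure α₀ → SubGaussian d α₀ →
      IsProbabilityMeasure α₁ → SubGaussian d α₁ →
      ∀ l : ℝ, l ∈ Set.Icc (0 : ℝ) 1 →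
        OTe d ε (ENNReal.ofReal l • α₀ + ENNReal.ofReal (1 - l) • α₁) β
          ≤ ((l : ℝ) : EReal) * OTe d ε α₀ β
            + ((1 - l : ℝ) : EReal) * OTe d ε α₁ β :=
  ot_product_convex_first_argument_general d ε hε β
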